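/- Let k ∈ {−1,0,1}, ε, n ∈ {0,1} with εn = εk = 0, and let a, b : ℝ → (0,∞) be C¹. Then the vector field η₃ with components (η₃⁰, η₃¹, η₃², η₃³) = e^{εz}(0, sin φ, f(r) cos φ, g(r) cos φ) in coordinates (t,r,φ,z) is a Killing vector field of the metric G on U = {(t,r,φ,z) : Σ(r,k) > 0}, i.e. for all indices α, β ∈ {0,1,2,3} and all points of U: Σ_μ (η₃^μ ∂_μ G_{αβ} + G_{μβ} ∂_α η₃^μ + G_{αμ} ∂_β η₃^μ) = 0. -/

import Mathlib

/-- `Σ(y,k)`: `sin y` for `k = 1`, `y` for `k = 0`, `sinh y` for `k = −1`. -/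
noncomputable def Sig (k y : ℝ) : ℝ :=
  if k = 1 then Real.sin y else if k = 0 then y else Real.sinh y

/-- `Σ_{,y}(y,k)`: `cos y` for `k = 1`, `1` for `k = 0`, `cosh y` for `k = −1`. -/
noncomputable def Sigr (k y : ℝ) : ℝ :=
  if k = 1 then Real.cos y else if k = 0 then 1 else Real.cosh y

/-- `F(y,k)`: `−cos y` for `k = 1`, `y²/2` for `k = 0`, `cosh y` for `k = −1`. -/
noncomputable def Ffun (k y : ℝ) : ℝ :=
  if k = 1 then -Real.cos y else if k = 0 then y ^ 2 / 2 else Real.cosh y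

/-- `f(r) = Σ_{,r}(r,k)/Σ(r,k)`. -/
noncomputable def ffun (k r : ℝ) : ℝ := Sigr k r / Sig k r

/-- `g(r) = n(Σ(r,k) − f(r)(F(r,k)+k))`. -/
noncomputable def gfun (k n r : ℝ) : ℝ :=
  n * (Sig k r - ffun k r * (Ffun k r + k))

/-- Coefficient matrix of the cylindrical LRS line element
`−dt² + a²(dz + n(F(r,k)+k)dφ)² + b²[(dr − εr dz)² + Σ(r,k)²dφ²]` in coordinates
`(t,r,φ,z) = (q 0, q 1, q 2, q 3)`. -/
noncomputable def gcyl (k ε n : ℝ) (a b : ℝ → ℝ) (q : Fin 4 → ℝ) :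
    Matrix (Fin 4) (Fin 4) ℝ :=
  !![-1, 0, 0, 0;
     0, (b (q 0)) ^ 2, 0, -ε * q 1 * (b (q 0)) ^ 2;
     0, 0, (a (q 0)) ^ 2 * (n * (Ffun k (q 1) + k)) ^ 2 +
       (b (q 0)) ^ 2 * (Sig k (q 1)) ^ 2,
       (a (q 0)) ^ 2 * n * (Ffun k (q 1) + k);
     0, -ε * q 1 * (b (q 0)) ^ 2, (a (q 0)) ^ 2 * n * (Ffun k (q 1) + k),
       (a (q 0)) ^ 2 + ε ^ 2 * (q 1) ^ 2 * (b (q 0)) ^ 2]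

/-- A vector field `X` is a Killing vector field of the metric components `G` at the
point `q` if `Σ_μ (X^μ ∂_μ G_{αβ} + G_{μβ} ∂_α X^μ + G_{αμ} ∂_β X^μ) = 0` for all
`α, β`, where `∂_μ` is the partial derivative in the `μ`-th coordinate direction. -/
def IsKillingAt (G : (Fin 4 → ℝ) → Matrix (Fin 4) (Fin 4) ℝ)
    (X : (Fin 4 → ℝ) → (Fin 4 → ℝ)) (q : Fin 4 → ℝ) : Prop :=
  ∀ α β : Fin 4,
    (∑ μ : Fin 4,
      (X q μ * fderiv ℝ (fun p => G p α β) q (Pi.single μ 1) +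
        G q μ β * fderiv ℝ (fun p => X p μ) q (Pi.single α 1) +
        G q α μ * fderiv ℝ (fun p => X p μ) q (Pi.single β 1))) = 0

/-- The vector field `η₃ = e^{εz}[sin φ ∂_r + cos φ(f(r)∂_φ + g(r)∂_z)]` in coordinates
`(t,r,φ,z)`. -/
noncomputable def eta3 (k ε n : ℝ) (q : Fin 4 → ℝ) : Fin 4 → ℝ :=
  ![0, Real.exp (ε * q 3) * Real.sin (q 2),
    Real.exp (ε * q 3) * ffun k (q 1) * Real.cos (q 2),
    Real.exp (ε * q 3) * gfun k n (q 1) * Real.cos (q 2)]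

/-!
The Killing equation `X^μ ∂_μ G + J G + G Jᵀ = 0`, with `J_{αμ} = ∂_α X^μ`, is checked entrywise.
The metric depends only on `t` and `r`, and `η₃` has no `t`-component, so the only derivative of
`G` that enters is `∂_r G`; every partial derivative is computed as an ordinary derivative along a
coordinate line. What remains is polynomial algebra in `f, g, Σ, F`, closed by
`f' = -(k + f²)`, `g' = n (k + f²)(F + k)`, the identity `Σ_{,r}² + k Σ² = 1`, and `εn = 0`,
`εΣ = εr`, `εΣ_{,r} = ε` (for `ε ≠ 0` the constraints force `k = n = 0`).
-/

open Function (update)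
open scoped Matrix

theorem hasDerivAt_Sig (k r : ℝ) : HasDerivAt (Sig k) (Sigr k r) r := by
  unfold Sig Sigr
  split_ifs
  · exact Real.hasDerivAt_sin r
  · exact hasDerivAt_id' r
  · exact Real.hasDerivAt_sinh r

theorem hasDerivAt_Sigr {k : ℝ} (hk : k = -1 ∨ k = 0 ∨ k = 1) (r : ℝ) :
    HasDerivAt (Sigr k) (-(k * Sig k r)) r := by
  unfold Sig Sigr
  rcases hk with rfl | rfl | rfl <;> norm_num
  · simpa using Real.hasDerivAt_cosh r
  · exact hasDerivAt_const r 1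
  · simpa using Real.hasDerivAt_cos r

theorem hasDerivAt_Ffun (k r : ℝ) : HasDerivAt (Ffun k) (Sig k r) r := by
  unfold Sig Ffun
  split_ifs
  · simpa using (Real.hasDerivAt_cos r).fun_neg
  · simpa using ((hasDerivAt_id r).pow 2).div_const 2
  · exact Real.hasDerivAt_cosh r

theorem Sigr_sq_add_mul_Sig_sq {k : ℝ} (hk : k = -1 ∨ k = 0 ∨ k = 1) (r : ℝ) :
    Sigr k r ^ 2 + k * Sig k r ^ 2 = 1 := by
  unfold Sig Sigr
  rcases hk with rfl | rfl | rfl <;> norm_num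
  linarith [Real.cosh_sq r]

theorem ffun_mul_Sig {k r : ℝ} (hS : Sig k r ≠ 0) : ffun k r * Sig k r = Sigr k r :=
  div_mul_cancel₀ _ hS

theorem hasDerivAt_ffun {k r : ℝ} (hk : k = -1 ∨ k = 0 ∨ k = 1) (hS : Sig k r ≠ 0) :
    HasDerivAt (ffun k) (-(k + ffun k r ^ 2)) r := by
  refine ((hasDerivAt_Sigr hk r).div (hasDerivAt_Sig k r) hS).congr_deriv ?_
  rw [← ffun_mul_Sig hS]
  field_simp
  ring

theorem hasDerivAt_gfun {k r : ℝ} (n : ℝ) (hk : k = -1 ∨ k = 0 ∨ k = 1) (hS : Sig k r ≠ 0) :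
    HasDerivAt (gfun k n) (n * (k + ffun k r ^ 2) * (Ffun k r + k)) r := by
  refine (((hasDerivAt_Sig k r).sub
      ((hasDerivAt_ffun hk hS).mul ((hasDerivAt_Ffun k r).add_const k))).const_mul n).congr_deriv ?_
  rw [← ffun_mul_Sig hS]
  ring

theorem mul_Sig_of_mul_eq_zero {k ε : ℝ} (hεk : ε * k = 0) (r : ℝ) :
    ε * Sig k r = ε * r := by
  rcases mul_eq_zero.1 hεk with rfl | rfl <;> simp [Sig]

theorem mul_Sigr_of_mul_eq_zero {k ε : ℝ} (hεk : ε * k = 0) (r : ℝ) : ε * Sigr k r = ε := by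
  rcases mul_eq_zero.1 hεk with rfl | rfl <;> simp [Sigr]

section PartialDerivatives

variable {ι : Type*} [Fintype ι] [DecidableEq ι] {f : (ι → ℝ) → ℝ} {q : ι → ℝ} {i : ι}

theorem fderiv_apply_single_eq_of_hasDerivAt_update {c : ℝ} (hf : DifferentiableAt ℝ f q)
    (h : HasDerivAt (fun s => f (update q i s)) c (q i)) :
    fderiv ℝ f q (Pi.single i 1) = c := by
  have hf' : HasFDerivAt f (fderiv ℝ f q) (update q i (q i)) := by
    rw [Function.update_eq_self]
    exact hf.hasFDerivAt
  exact (hf'.comp_hasDerivAt (q i) (hasDerivAt_update q i (q i))).unique h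

theorem fderiv_apply_single_eq_zero_of_update_eq (h : ∀ s, f (update q i s) = f q) :
    fderiv ℝ f q (Pi.single i 1) = 0 := by
  by_cases hf : DifferentiableAt ℝ f q
  · refine fderiv_apply_single_eq_of_hasDerivAt_update hf ?_
    simpa only [h] using hasDerivAt_const (q i) (f q)
  · simp [fderiv_zero_of_not_differentiableAt hf]

end PartialDerivatives

section KillingEquation

variable {ι : Type*} [Fintype ι] [DecidableEq ι]

noncomputable def partialMatrix (G : (ι → ℝ) → Matrix ι ι ℝ) (q : ι → ℝ) (μ : ι) :
    Matrix ι ι ℝ :=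
  Matrix.of fun α β => fderiv ℝ (fun p => G p α β) q (Pi.single μ 1)

noncomputable def jacobianMatrix (X : (ι → ℝ) → ι → ℝ) (q : ι → ℝ) : Matrix ι ι ℝ :=
  Matrix.of fun α μ => fderiv ℝ (fun p => X p μ) q (Pi.single α 1)

theorem isKillingAt_iff (G : (Fin 4 → ℝ) → Matrix (Fin 4) (Fin 4) ℝ)
    (X : (Fin 4 → ℝ) → Fin 4 → ℝ) (q : Fin 4 → ℝ) :
    IsKillingAt G X q ↔ ∑ μ, X q μ • partialMatrix G q μ + jacobianMatrix X q * G q +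
      G q * (jacobianMatrix X q)ᵀ = 0 := by
  simp only [IsKillingAt, ← Matrix.ext_iff, Matrix.add_apply, Matrix.sum_apply,
    Matrix.smul_apply, Matrix.mul_apply, Matrix.transpose_apply, partialMatrix, jacobianMatrix,
    Matrix.of_apply, smul_eq_mul, Matrix.zero_apply, ← Finset.sum_add_distrib]
  refine forall₂_congr fun α β => ?_
  simp only [mul_comm]

end KillingEquation

section LRS

variable {k ε n : ℝ} {a b : ℝ → ℝ} {q : Fin 4 → ℝ}

theorem partialMatrix_gcyl_eq_zero {μ : Fin 4} (h0 : μ ≠ 0) (h1 : μ ≠ 1) :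
    partialMatrix (gcyl k ε n a b) q μ = 0 := by
  ext α β
  refine fderiv_apply_single_eq_zero_of_update_eq fun s => ?_
  simp only [gcyl, Function.update_of_ne h0.symm, Function.update_of_ne h1.symm]

theorem partialMatrix_gcyl_one (ha : DifferentiableAt ℝ a (q 0))
    (hb : DifferentiableAt ℝ b (q 0)) :
    partialMatrix (gcyl k ε n a b) q 1 =
      !![0, 0, 0, 0;
         0, 0, 0, -ε * b (q 0) ^ 2;
         0, 0, 2 * a (q 0) ^ 2 * n ^ 2 * (Ffun k (q 1) + k) * Sig k (q 1) +
           2 * b (q 0) ^ 2 * Sig k (q 1) * Sigr k (q 1), a (q 0) ^ 2 * n * Sig k (q 1);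
         0, -ε * b (q 0) ^ 2, a (q 0) ^ 2 * n * Sig k (q 1), 2 * ε ^ 2 * q 1 * b (q 0) ^ 2] := by
  have hSig : Differentiable ℝ (Sig k) := fun r => (hasDerivAt_Sig k r).differentiableAt
  have hF : Differentiable ℝ (Ffun k) := fun r => (hasDerivAt_Ffun k r).differentiableAt
  have h13 : HasDerivAt (fun s => -(ε * s * b (q 0) ^ 2)) (-(ε * b (q 0) ^ 2)) (q 1) := by
    simpa using (((hasDerivAt_id (q 1)).const_mul ε).mul_const (b (q 0) ^ 2)).fun_neg
  have h22 : HasDerivAt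
      (fun s => a (q 0) ^ 2 * (n * (Ffun k s + k)) ^ 2 + b (q 0) ^ 2 * Sig k s ^ 2)
      (2 * a (q 0) ^ 2 * n ^ 2 * (Ffun k (q 1) + k) * Sig k (q 1) +
        2 * b (q 0) ^ 2 * Sig k (q 1) * Sigr k (q 1)) (q 1) :=
    ((((((hasDerivAt_Ffun k (q 1)).add_const k).const_mul n).fun_pow 2).const_mul
      (a (q 0) ^ 2)).add (((hasDerivAt_Sig k (q 1)).fun_pow 2).const_mul (b (q 0) ^ 2))).congr_deriv
      (by ring)
  have h23 := ((hasDerivAt_Ffun k (q 1)).add_const k).const_mul (a (q 0) ^ 2 * n)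
  have h33 :
      HasDerivAt (fun s => ε ^ 2 * s ^ 2 * b (q 0) ^ 2) (2 * ε ^ 2 * q 1 * b (q 0) ^ 2) (q 1) :=
    (((hasDerivAt_pow 2 (q 1)).const_mul (ε ^ 2)).mul_const (b (q 0) ^ 2)).congr_deriv (by ring)
  ext α β
  fin_cases α <;> fin_cases β <;> refine fderiv_apply_single_eq_of_hasDerivAt_update ?_ ?_ <;>
    simp [gcyl] <;>
    first | fun_prop | exact hasDerivAt_const _ _ | exact h13 | exact h22 | exact h23 | exact h33

theorem jacobianMatrix_eta3 (hk : k = -1 ∨ k = 0 ∨ k = 1) (hS : Sig k (q 1) ≠ 0) :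
    jacobianMatrix (eta3 k ε n) q =
      !![0, 0, 0, 0;
         0, 0, -(k + ffun k (q 1) ^ 2) * Real.exp (ε * q 3) * Real.cos (q 2),
           n * (k + ffun k (q 1) ^ 2) * (Ffun k (q 1) + k) * Real.exp (ε * q 3) * Real.cos (q 2);
         0, Real.exp (ε * q 3) * Real.cos (q 2),
           -ffun k (q 1) * Real.exp (ε * q 3) * Real.sin (q 2),
           -gfun k n (q 1) * Real.exp (ε * q 3) * Real.sin (q 2);
         0, ε * Real.exp (ε * q 3) * Real.sin (q 2),
           ε * Real.exp (ε * q 3) * ffun k (q 1) * Real.cos (q 2),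
           ε * Real.exp (ε * q 3) * gfun k n (q 1) * Real.cos (q 2)] := by
  have hf := hasDerivAt_ffun hk hS
  have hg := hasDerivAt_gfun n hk hS
  have hfd := hf.differentiableAt
  have hgd := hg.differentiableAt
  have hexp := ((hasDerivAt_id' (q 3)).const_mul ε).exp
  ext α μ
  fin_cases α
  · fin_cases μ <;> exact fderiv_apply_single_eq_zero_of_update_eq fun s => by simp [eta3]
  all_goals
    fin_cases μ <;> refine fderiv_apply_single_eq_of_hasDerivAt_update ?_ ?_ <;> simp [eta3]
  any_goals fun_prop
  any_goals exact hasDerivAt_const _ _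
  · exact ((hf.const_mul _).mul_const _).congr_deriv (by ring)
  · exact ((hg.const_mul _).mul_const _).congr_deriv (by ring)
  · exact ((Real.hasDerivAt_sin _).const_mul _).congr_deriv (by ring)
  · exact ((Real.hasDerivAt_cos _).const_mul _).congr_deriv (by ring)
  · exact ((Real.hasDerivAt_cos _).const_mul _).congr_deriv (by ring)
  · exact (hexp.mul_const _).congr_deriv (by ring)
  · exact ((hexp.mul_const _).mul_const _).congr_deriv (by ring)
  · exact ((hexp.mul_const _).mul_const _).congr_deriv (by ring)

end LRS

theorem eta3_is_killing_general (k ε n : ℝ)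
    (hk : k = -1 ∨ k = 0 ∨ k = 1)
    (hεn : ε * n = 0) (hεk : ε * k = 0)
    (a b : ℝ → ℝ) (ha : ContDiff ℝ 1 a) (hb : ContDiff ℝ 1 b) :
    ∀ q : Fin 4 → ℝ, 0 < Sig k (q 1) →
      IsKillingAt (gcyl k ε n a b) (eta3 k ε n) q := by
  intro q hS
  rw [isKillingAt_iff, Fin.sum_univ_four,
    partialMatrix_gcyl_one (ha.differentiable one_ne_zero _) (hb.differentiable one_ne_zero _),
    partialMatrix_gcyl_eq_zero (μ := 2) (by decide) (by decide),
    partialMatrix_gcyl_eq_zero (μ := 3) (by decide) (by decide), jacobianMatrix_eta3 hk hS.ne']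
  have hC := ffun_mul_Sig hS.ne'
  have hP : (ffun k (q 1) * Sig k (q 1)) ^ 2 + k * Sig k (q 1) ^ 2 = 1 :=
    hC ▸ Sigr_sq_add_mul_Sig_sq hk (q 1)
  have hεS := mul_Sig_of_mul_eq_zero hεk (q 1)
  have hεS' : ε * (ffun k (q 1) * Sig k (q 1)) = ε :=
    hC ▸ mul_Sigr_of_mul_eq_zero hεk (q 1)
  ext α β
  simp only [Matrix.add_apply, Matrix.smul_apply, Matrix.mul_apply, Fin.sum_univ_four,
    Matrix.transpose_apply, Matrix.zero_apply, smul_eq_mul]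
  fin_cases α <;> fin_cases β <;> simp [eta3, gcyl, ← hC, gfun] <;> grind

/-- `η₃` is a Killing vector field of the LRS metric `gcyl` on the region
`U = {Σ(r,k) > 0}`. -/
theorem eta3_is_killing (k ε n : ℝ)
    (hk : k = -1 ∨ k = 0 ∨ k = 1) (hε : ε = 0 ∨ ε = 1) (hn : n = 0 ∨ n = 1)
    (hεn : ε * n = 0) (hεk : ε * k = 0)
    (a b : ℝ → ℝ) (ha : ContDiff ℝ 1 a) (hb : ContDiff ℝ 1 b)
    (hapos : ∀ t, 0 < a t) (hbpos : ∀ t, 0 < b t) :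
    ∀ q : Fin 4 → ℝ, 0 < Sig k (q 1) →
      IsKillingAt (gcyl k ε n a b) (eta3 k ε n) q :=
  eta3_is_killing_general k ε n hk hεn hεk a b ha hb
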